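/- For every reward R ∈ ℝ^m with R ≤ 0, the admissible set D(R) is nonempty, compact, and convex; in particular, both the zero vector and the optimal value vector V*_R belong to D(R). -/

import Mathlib

open Matrix MeasureTheory Filter Topology

noncomputable section

/-- The policy matrix `Π` of a deterministic policy `π`. -/
def polMat {n m : ℕ} (π : Fin n → Fin m) : Matrix (Fin n) (Fin m) ℝ :=
  Matrix.of fun i j => if j = π i then 1 else 0

/-- The matrix `S` with `S^j_i = 1` iff `s j = i`. -/
def projMat {n m : ℕ} (s : Fin m → Fin n) : Matrix (Fin m) (Fin n) ℝ :=
  Matrix.of fun j i => if s j = i then 1 else 0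

/-- A row-stochastic matrix: nonnegative entries, rows summing to one. -/
def RowStochastic {n m : ℕ} (F : Matrix (Fin m) (Fin n) ℝ) : Prop :=
  (∀ j i, 0 ≤ F j i) ∧ ∀ j, ∑ i, F j i = 1

/-- A deterministic policy: a section of the state projection `s`. -/
def IsPolicy {n m : ℕ} (s : Fin m → Fin n) (π : Fin n → Fin m) : Prop :=
  ∀ i, s (π i) = i

/-- The value vector `V_{π,R} = (I − γΠF)⁻¹ Π R`. -/
def valueVec {n m : ℕ} (γ : ℝ) (F : Matrix (Fin m) (Fin n) ℝ)
    (π : Fin n → Fin m) (R : Fin m → ℝ) : Fin n → ℝ :=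
  ((1 : Matrix (Fin n) (Fin n) ℝ) - γ • (polMat π * F))⁻¹ *ᵥ (polMat π *ᵥ R)

/-- A policy is optimal for `R` when its value vector dominates all others componentwise. -/
def IsOptimal {n m : ℕ} (s : Fin m → Fin n) (γ : ℝ) (F : Matrix (Fin m) (Fin n) ℝ)
    (R : Fin m → ℝ) (π : Fin n → Fin m) : Prop :=
  IsPolicy s π ∧ ∀ π', IsPolicy s π' → ∀ i, valueVec γ F π' R i ≤ valueVec γ F π R i

/-- `hmax R i = max_{j ∈ U_i} R j`. -/
def hmax {n m : ℕ} (s : Fin m → Fin n) (R : Fin m → ℝ) (i : Fin n) : ℝ :=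
  sSup {x | ∃ j, s j = i ∧ R j = x}

/-!
A minimum principle drives the argument: if `P` is row-stochastic, `0 ≤ γ < 1` and
`u = c + γ P u` with `c ≥ 0`, then `u ≥ 0`, since at a minimal coordinate `u k ≥ γ (P u) k ≥ γ u k`.
With `c = 0` it makes `I − γ P` invertible, so value vectors solve `V = Π R + γ Π F V`.

Switching the optimal policy at state `s j` to action `j` changes its value by some `e` with
`e = δ • 1_{s j} + γ P' e`, where `δ = R j + γ (F V*) j − V* (s j)`; if `δ > 0` the principle
gives `e (s j) ≥ δ > 0`, against optimality. Hence `R + B V* ≤ 0`, while `R + B 0 = R ≤ 0`.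
Finally `D(R)` is an affine preimage of a closed orthant intersected with a box of closed
intervals, so it is convex and compact.
-/

section Matrices

variable {n m : ℕ}

lemma polMat_mulVec (π : Fin n → Fin m) (R : Fin m → ℝ) (i : Fin n) :
    (polMat π *ᵥ R) i = R (π i) := by
  simp [polMat, mulVec, dotProduct, ite_mul]

lemma polMat_mul_apply (π : Fin n → Fin m) (F : Matrix (Fin m) (Fin n) ℝ) (i l : Fin n) :
    (polMat π * F) i l = F (π i) l := by
  simp [polMat, mul_apply, ite_mul]

lemma projMat_mulVec (s : Fin m → Fin n) (Δ : Fin n → ℝ) (j : Fin m) :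
    (projMat s *ᵥ Δ) j = Δ (s j) := by
  simp [projMat, mulVec, dotProduct]

lemma RowStochastic.polMat_mul {F : Matrix (Fin m) (Fin n) ℝ} (hF : RowStochastic F)
    (π : Fin n → Fin m) : RowStochastic (polMat π * F) :=
  ⟨fun i l => by rw [polMat_mul_apply]; exact hF.1 _ _,
    fun i => by simp only [polMat_mul_apply]; exact hF.2 _⟩

lemma RowStochastic.le_mulVec {M : Matrix (Fin m) (Fin n) ℝ} (hM : RowStochastic M)
    {v : Fin n → ℝ} {a : ℝ} (hv : ∀ l, a ≤ v l) (j : Fin m) : a ≤ (M *ᵥ v) j :=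
  calc a = ∑ l, M j l * a := by rw [← Finset.sum_mul, hM.2, one_mul]
    _ ≤ ∑ l, M j l * v l :=
      Finset.sum_le_sum fun l _ => mul_le_mul_of_nonneg_left (hv l) (hM.1 j l)

variable {M : Matrix (Fin n) (Fin n) ℝ} {γ : ℝ}

lemma RowStochastic.nonneg_of_eq_add_smul_mulVec (hM : RowStochastic M) (hγ0 : 0 ≤ γ)
    (hγ1 : γ < 1) {u c : Fin n → ℝ} (hc : 0 ≤ c) (hu : u = c + γ • (M *ᵥ u)) : 0 ≤ u := by
  rcases isEmpty_or_nonempty (Fin n) with _ | _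
  · exact fun i => isEmptyElim i
  obtain ⟨k, hk⟩ := Finite.exists_min u
  have huk : u k = c k + γ * (M *ᵥ u) k := congrFun hu k
  have hMu : γ * u k ≤ γ * (M *ᵥ u) k := mul_le_mul_of_nonneg_left (hM.le_mulVec hk k) hγ0
  have hk0 : 0 ≤ u k := by nlinarith [show 0 ≤ c k from hc k]
  exact fun l => hk0.trans (hk l)

lemma RowStochastic.isUnit_one_sub_smul (hM : RowStochastic M) (hγ0 : 0 ≤ γ) (hγ1 : γ < 1) :
    IsUnit (1 - γ • M) := by
  rw [← mulVec_injective_iff_isUnit]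
  intro v w hvw
  have hfix : ∀ u : Fin n → ℝ, (1 - γ • M) *ᵥ u = 0 → u = 0 + γ • (M *ᵥ u) := fun u hu => by
    rwa [sub_mulVec, one_mulVec, smul_mulVec, sub_eq_zero, ← zero_add (γ • _)] at hu
  have hker : (1 - γ • M) *ᵥ (v - w) = 0 := by rw [mulVec_sub, hvw, sub_self]
  have hpos := hM.nonneg_of_eq_add_smul_mulVec hγ0 hγ1 le_rfl (hfix _ hker)
  have hneg := hM.nonneg_of_eq_add_smul_mulVec hγ0 hγ1 le_rfl
    (hfix _ (by rw [mulVec_neg, hker, neg_zero]))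
  exact sub_eq_zero.1 (le_antisymm (neg_nonneg.1 hneg) hpos)

end Matrices

section Values

variable {n m : ℕ} {γ : ℝ} {F : Matrix (Fin m) (Fin n) ℝ}

lemma valueVec_eq_polMat_mulVec_add (hγ0 : 0 ≤ γ) (hγ1 : γ < 1) (hF : RowStochastic F)
    (π : Fin n → Fin m) (R : Fin m → ℝ) :
    valueVec γ F π R = polMat π *ᵥ R + γ • ((polMat π * F) *ᵥ valueVec γ F π R) := by
  have hA := (hF.polMat_mul π).isUnit_one_sub_smul hγ0 hγ1
  have key : (1 - γ • (polMat π * F)) *ᵥ valueVec γ F π R = polMat π *ᵥ R := by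
    rw [valueVec, mulVec_mulVec, mul_nonsing_inv _ ((isUnit_iff_isUnit_det _).mp hA),
      one_mulVec]
  rwa [sub_mulVec, one_mulVec, smul_mulVec, sub_eq_iff_eq_add] at key

lemma valueVec_apply_eq_add (hγ0 : 0 ≤ γ) (hγ1 : γ < 1) (hF : RowStochastic F)
    (π : Fin n → Fin m) (R : Fin m → ℝ) (i : Fin n) :
    valueVec γ F π R i = R (π i) + γ * (F *ᵥ valueVec γ F π R) (π i) := by
  have h := congrFun (valueVec_eq_polMat_mulVec_add hγ0 hγ1 hF π R) i
  rwa [← mulVec_mulVec, Pi.add_apply, Pi.smul_apply, polMat_mulVec, polMat_mulVec,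
    smul_eq_mul] at h

lemma IsOptimal.reward_add_le_valueVec {s : Fin m → Fin n} {R : Fin m → ℝ}
    {πs : Fin n → Fin m} (hπs : IsOptimal s γ F R πs) (hγ0 : 0 ≤ γ) (hγ1 : γ < 1)
    (hF : RowStochastic F) (j : Fin m) :
    R j + γ * (F *ᵥ valueVec γ F πs R) j ≤ valueVec γ F πs R (s j) := by
  classical
  set V := valueVec γ F πs R
  set π' := Function.update πs (s j) j
  set V' := valueVec γ F π' R
  have hπ' : IsPolicy s π' := fun k => by
    rcases eq_or_ne k (s j) with rfl | hk
    · simp [π']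
    · simp [π', hk, hπs.1 k]
  have hVeq : ∀ k, V k = R (πs k) + γ * (F *ᵥ V) (πs k) :=
    valueVec_apply_eq_add hγ0 hγ1 hF πs R
  have hV'eq : ∀ k, V' k = R (π' k) + γ * (F *ᵥ V') (π' k) :=
    valueVec_apply_eq_add hγ0 hγ1 hF π' R
  by_contra! hδ
  set δ := R j + γ * (F *ᵥ V) j - V (s j)
  have he : V' - V = Pi.single (s j) δ + γ • ((polMat π' * F) *ᵥ (V' - V)) := by
    funext k
    simp only [← mulVec_mulVec, Pi.add_apply, Pi.sub_apply, Pi.smul_apply, polMat_mulVec,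
      mulVec_sub, smul_eq_mul, hV'eq k]
    rcases eq_or_ne k (s j) with rfl | hk
    · simp only [π', Function.update_self, Pi.single_eq_same, δ]
      ring
    · simp only [π', Function.update_of_ne hk, Pi.single_eq_of_ne hk, hVeq k]
      ring
  have he_nonneg : 0 ≤ V' - V := (hF.polMat_mul π').nonneg_of_eq_add_smul_mulVec hγ0 hγ1
    (Pi.single_nonneg.2 (by linarith)) he
  have hFe : 0 ≤ γ * (F *ᵥ (V' - V)) j := mul_nonneg hγ0 (hF.le_mulVec he_nonneg j)
  have he_sj := congrFun he (s j)
  rw [← mulVec_mulVec, Pi.add_apply, Pi.smul_apply, polMat_mulVec, Pi.single_eq_same,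
    smul_eq_mul] at he_sj
  simp only [π', Function.update_self] at he_sj
  have hle : (V' - V) (s j) ≤ 0 := sub_nonpos.2 (hπs.2 π' hπ' (s j))
  linarith

end Values

section AdmissibleSet

variable {ι κ : Type*}

lemma setOf_abs_sub_le_abs_eq_pi (V : ι → ℝ) :
    {Δ : ι → ℝ | ∀ i, |V i - Δ i| ≤ |V i|} =
      Set.univ.pi fun i => Metric.closedBall (V i) |V i| := by
  ext Δ
  simp [Real.dist_eq, abs_sub_comm]

variable [Fintype ι]

lemma isClosed_setOf_add_mulVec_nonpos (R : κ → ℝ) (B : Matrix κ ι ℝ) :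
    IsClosed {Δ : ι → ℝ | R + B *ᵥ Δ ≤ 0} :=
  isClosed_le (continuous_const.add (continuous_const.matrix_mulVec continuous_id))
    continuous_const

lemma convex_setOf_add_mulVec_nonpos (R : κ → ℝ) (B : Matrix κ ι ℝ) :
    Convex ℝ {Δ : ι → ℝ | R + B *ᵥ Δ ≤ 0} := by
  have h : {Δ : ι → ℝ | R + B *ᵥ Δ ≤ 0} = B.mulVecLin ⁻¹' Set.Iic (-R) := by
    ext Δ
    rw [Set.mem_preimage, Set.mem_Iic, mulVecLin_apply]
    exact (le_neg_iff_add_nonpos_left (a := B *ᵥ Δ) (b := R)).symm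
  rw [h]
  exact (convex_Iic _).linear_preimage _

end AdmissibleSet

theorem admissible_set_properties_general {n m : ℕ}
    (s : Fin m → Fin n)
    (γ : ℝ) (hγ0 : 0 ≤ γ) (hγ1 : γ < 1)
    (F : Matrix (Fin m) (Fin n) ℝ) (hF : RowStochastic F)
    (R : Fin m → ℝ) (hR : R ≤ 0)
    (πs : Fin n → Fin m) (hπs : IsOptimal s γ F R πs)
    (D : Set (Fin n → ℝ))
    (hD : D = {Δ : Fin n → ℝ | R + (γ • F - projMat s) *ᵥ Δ ≤ 0} ∩
        {Δ : Fin n → ℝ | ∀ i, |valueVec γ F πs R i - Δ i| ≤ |valueVec γ F πs R i|}) :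
    (0 : Fin n → ℝ) ∈ D ∧ valueVec γ F πs R ∈ D ∧
      D.Nonempty ∧ IsCompact D ∧ Convex ℝ D := by
  set V := valueVec γ F πs R
  rw [setOf_abs_sub_le_abs_eq_pi] at hD
  have h0 : (0 : Fin n → ℝ) ∈ D := by
    rw [hD]
    exact ⟨by simpa using hR, by simp⟩
  have hV : V ∈ D := by
    rw [hD]
    refine ⟨fun j => ?_, by simp⟩
    have hj := hπs.reward_add_le_valueVec hγ0 hγ1 hF j
    rw [Pi.add_apply, sub_mulVec, smul_mulVec, Pi.sub_apply, Pi.smul_apply, projMat_mulVec,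
      smul_eq_mul, Pi.zero_apply]
    linarith
  refine ⟨h0, hV, ⟨0, h0⟩, ?_, ?_⟩ <;> rw [hD]
  · exact (isCompact_univ_pi fun _ => isCompact_closedBall _ _).inter_left
      (isClosed_setOf_add_mulVec_nonpos _ _)
  · exact (convex_setOf_add_mulVec_nonpos _ _).inter (convex_pi fun _ _ => convex_closedBall _ _)

/-- For `R ≤ 0`, the admissible set `D(R)` is nonempty (it contains `0` and
the optimal value vector `V*_R`), compact, and convex. -/
theorem admissible_set_properties {n m : ℕ} (hn : 1 ≤ n) (hm : 1 ≤ m)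
    (s : Fin m → Fin n) (hs : Function.Surjective s)
    (γ : ℝ) (hγ0 : 0 ≤ γ) (hγ1 : γ < 1)
    (F : Matrix (Fin m) (Fin n) ℝ) (hF : RowStochastic F)
    (R : Fin m → ℝ) (hR : R ≤ 0)
    (πs : Fin n → Fin m) (hπs : IsOptimal s γ F R πs)
    (D : Set (Fin n → ℝ))
    (hD : D = {Δ : Fin n → ℝ | R + (γ • F - projMat s) *ᵥ Δ ≤ 0} ∩
        {Δ : Fin n → ℝ | ∀ i, |valueVec γ F πs R i - Δ i| ≤ |valueVec γ F πs R i|}) :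
    (0 : Fin n → ℝ) ∈ D ∧ valueVec γ F πs R ∈ D ∧
      D.Nonempty ∧ IsCompact D ∧ Convex ℝ D :=
  admissible_set_properties_general s γ hγ0 hγ1 F hF R hR πs hπs D hD
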